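/- The type II saddle map μ: V ⊗ V → A given by μ(v₋ ⊗ v₋) = 0, μ(v₊ ⊗ v₋) = X, μ(v₋ ⊗ v₊) = X, μ(v₊ ⊗ v₊) = 0 is sl2-equivariant, where V ⊗ V is identified with V₁ ⊗ V₁* (first factor v₋ ↔ v₀, v₊ ↔ v₁; second factor v₊ ↔ v₀*, v₋ ↔ v₁*) and A carries the trivial sl2-action. -/

import Mathlib

open TensorProduct

/-- V₁ = ℤ², the fundamental representation, with basis v₀, v₁. -/
abbrev V1 : Type := Fin 2 → ℤ
/-- V₁* = the dual, with basis v₀*, v₁*. -/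
abbrev Vd : Type := Fin 2 → ℤ

noncomputable def b1 : Module.Basis (Fin 2) ℤ V1 := Pi.basisFun ℤ (Fin 2)
noncomputable def bd : Module.Basis (Fin 2) ℤ Vd := Pi.basisFun ℤ (Fin 2)

noncomputable def v0 : V1 := b1 0
noncomputable def v1 : V1 := b1 1
noncomputable def d0 : Vd := bd 0
noncomputable def d1 : Vd := bd 1

/-- E v₀ = v₁, E v₁ = 0. -/
noncomputable def E1 : V1 →ₗ[ℤ] V1 := b1.constr ℤ ![v1, 0]
/-- F v₀ = 0, F v₁ = v₀. -/
noncomputable def F1 : V1 →ₗ[ℤ] V1 := b1.constr ℤ ![0, v0]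
/-- H v₀ = -v₀, H v₁ = v₁. -/
noncomputable def H1 : V1 →ₗ[ℤ] V1 := b1.constr ℤ ![-v0, v1]
/-- E v₀* = 0, E v₁* = -v₀*. -/
noncomputable def Ed : Vd →ₗ[ℤ] Vd := bd.constr ℤ ![0, -d0]
/-- F v₀* = -v₁*, F v₁* = 0. -/
noncomputable def Fd : Vd →ₗ[ℤ] Vd := bd.constr ℤ ![-d1, 0]
/-- H v₀* = v₀*, H v₁* = -v₁*. -/
noncomputable def Hd : Vd →ₗ[ℤ] Vd := bd.constr ℤ ![d0, -d1]

/-- Diagonal action of E on V₁ ⊗ V₁*. -/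
noncomputable def Et : V1 ⊗[ℤ] Vd →ₗ[ℤ] V1 ⊗[ℤ] Vd :=
  TensorProduct.map E1 LinearMap.id + TensorProduct.map LinearMap.id Ed
/-- Diagonal action of F on V₁ ⊗ V₁*. -/
noncomputable def Ft : V1 ⊗[ℤ] Vd →ₗ[ℤ] V1 ⊗[ℤ] Vd :=
  TensorProduct.map F1 LinearMap.id + TensorProduct.map LinearMap.id Fd
/-- Diagonal action of H on V₁ ⊗ V₁*. -/
noncomputable def Ht : V1 ⊗[ℤ] Vd →ₗ[ℤ] V1 ⊗[ℤ] Vd :=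
  TensorProduct.map H1 LinearMap.id + TensorProduct.map LinearMap.id Hd

/-- A = ℤ{1, X}, carrying the trivial sl2-action. -/
abbrev A : Type := Fin 2 → ℤ
noncomputable def bA : Module.Basis (Fin 2) ℤ A := Pi.basisFun ℤ (Fin 2)
noncomputable def X' : A := bA 1

/-- The type II saddle map μ : V ⊗ V → A. Under the identifications
v₋ ↔ v₀, v₊ ↔ v₁ (first factor) and v₊ ↔ v₀*, v₋ ↔ v₁* (second factor):
μ(v₀ ⊗ v₀*) = X (= μ(v₋ ⊗ v₊)), μ(v₀ ⊗ v₁*) = 0 (= μ(v₋ ⊗ v₋)),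
μ(v₁ ⊗ v₀*) = 0 (= μ(v₊ ⊗ v₊)), μ(v₁ ⊗ v₁*) = X (= μ(v₊ ⊗ v₋)). -/
noncomputable def μ : V1 ⊗[ℤ] Vd →ₗ[ℤ] A :=
  (b1.tensorProduct bd).constr ℤ fun p => ![![X', 0], ![0, X']] p.1 p.2

/-! In the given bases μ is `X` times the evaluation pairing `V₁ ⊗ V₁* → ℤ`, i.e. the dot product.
Each generator acts on `V₁*` by minus the transpose of its matrix `M` on `V₁`, and the pairing is
invariant under such a pair: `(M v) ⬝ᵥ w + v ⬝ᵥ (-Mᵀ w) = 0`. -/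

open Matrix in
theorem Matrix.mulVec_dotProduct_add_dotProduct_neg_transpose_mulVec {R n : Type*} [CommRing R]
    [Fintype n] (M : Matrix n n R) (v w : n → R) :
    M *ᵥ v ⬝ᵥ w + v ⬝ᵥ (-Mᵀ) *ᵥ w = 0 := by
  rw [neg_mulVec, dotProduct_neg, mulVec_transpose, dotProduct_comm v, ← dotProduct_mulVec,
    dotProduct_comm (M *ᵥ v), add_neg_cancel]

theorem TensorProduct.comp_map_add_map_eq_zero {R M N P : Type*} [CommSemiring R]
    [AddCommMonoid M] [AddCommMonoid N] [AddCommMonoid P] [Module R M] [Module R N] [Module R P]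
    (φ : M ⊗[R] N →ₗ[R] P) (f : M →ₗ[R] M) (g : N →ₗ[R] N)
    (h : ∀ m n, φ (f m ⊗ₜ n) + φ (m ⊗ₜ g n) = 0) :
    φ ∘ₗ (map f LinearMap.id + map LinearMap.id g) = 0 :=
  TensorProduct.ext' fun m n => by simpa using h m n

theorem μ_eq_toSpanSingleton_comp_lift_dotProductBilin :
    μ = LinearMap.toSpanSingleton ℤ A X' ∘ₗ lift (dotProductBilin ℤ ℤ) := by
  refine (b1.tensorProduct bd).ext fun ⟨i, j⟩ => ?_
  rw [μ, Module.Basis.constr_basis, Module.Basis.tensorProduct_apply]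
  fin_cases i <;> fin_cases j <;> simp [b1, bd]

theorem μ_tmul (v : V1) (w : Vd) : μ (v ⊗ₜ w) = (v ⬝ᵥ w) • X' :=
  LinearMap.congr_fun μ_eq_toSpanSingleton_comp_lift_dotProductBilin (v ⊗ₜ w)

open Matrix in
theorem μ_comp_map_add_map_eq_zero {J : V1 →ₗ[ℤ] V1} {Jd : Vd →ₗ[ℤ] Vd}
    {M : Matrix (Fin 2) (Fin 2) ℤ} (hJ : J = Matrix.toLin' M)
    (hJd : Jd = Matrix.toLin' (-M.transpose)) :
    μ ∘ₗ (TensorProduct.map J LinearMap.id + TensorProduct.map LinearMap.id Jd) = 0 :=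
  comp_map_add_map_eq_zero μ J Jd fun v w => by
    subst hJ hJd
    -- not `rw [μ_tmul]`: the ℤ-module instance on `V1 ⊗ Vd` inside `μ` is only defeq, not
    -- syntactically equal, to the one `TensorProduct.map` produces
    calc μ (_ ⊗ₜ w) + μ (v ⊗ₜ _) = (M *ᵥ v ⬝ᵥ w + v ⬝ᵥ (-M.transpose) *ᵥ w) • X' :=
          (congrArg₂ (· + ·) (μ_tmul _ _) (μ_tmul _ _)).trans (add_smul _ _ _).symm
      _ = 0 := by rw [M.mulVec_dotProduct_add_dotProduct_neg_transpose_mulVec, zero_smul]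

theorem E1_eq_toLin' : E1 = Matrix.toLin' !![0, 0; 1, 0] := by
  ext i j
  fin_cases i <;> fin_cases j <;> simp [E1, b1, v1]

theorem Ed_eq_toLin' : Ed = Matrix.toLin' (-!![0, 0; 1, 0].transpose) := by
  ext i j
  fin_cases i <;> fin_cases j <;> simp [Ed, bd, d0]

theorem F1_eq_toLin' : F1 = Matrix.toLin' !![0, 1; 0, 0] := by
  ext i j
  fin_cases i <;> fin_cases j <;> simp [F1, b1, v0]

theorem Fd_eq_toLin' : Fd = Matrix.toLin' (-!![0, 1; 0, 0].transpose) := by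
  ext i j
  fin_cases i <;> fin_cases j <;> simp [Fd, bd, d1]

theorem H1_eq_toLin' : H1 = Matrix.toLin' !![-1, 0; 0, 1] := by
  ext i j
  fin_cases i <;> fin_cases j <;> simp [H1, b1, v0, v1]

theorem Hd_eq_toLin' : Hd = Matrix.toLin' (-!![-1, 0; 0, 1].transpose) := by
  ext i j
  fin_cases i <;> fin_cases j <;> simp [Hd, bd, d0, d1]

/-- μ is sl2-equivariant: since A carries the trivial action,
μ ∘ J = 0 ∘ μ = 0 for each generator J ∈ {E, F, H}. -/
theorem typeII_saddle_equivariant :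
    μ ∘ₗ Et = (0 : A →ₗ[ℤ] A) ∘ₗ μ ∧
    μ ∘ₗ Ft = (0 : A →ₗ[ℤ] A) ∘ₗ μ ∧
    μ ∘ₗ Ht = (0 : A →ₗ[ℤ] A) ∘ₗ μ := by
  simp only [LinearMap.zero_comp]
  exact ⟨μ_comp_map_add_map_eq_zero E1_eq_toLin' Ed_eq_toLin',
    μ_comp_map_add_map_eq_zero F1_eq_toLin' Fd_eq_toLin',
    μ_comp_map_add_map_eq_zero H1_eq_toLin' Hd_eq_toLin'⟩
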